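/- In the policy-regularized d-rectangular DRMDP, there exists a policy π* achieving the optimal regularized robust value: for all (s,a,h), Ṽ_h^{π*,ρ}(s) = sup_π Ṽ_h^{π,ρ}(s) and Q̃_h^{π*,ρ}(s,a) = sup_π Q̃_h^{π,ρ}(s,a), and π* has the closed form π*_h(a|s) = π_ref_h(a|s)·exp(η·Q̃_h^{*,ρ}(s,a)) / Z_h(s), where Z_h(s) = Σ_a π_ref_h(a|s)·exp(η·Q̃_h^{*,ρ}(s,a)). -/

import Mathlib

open Finset

/-- KL divergence between two distributions on a finite set. -/
noncomputable def klFin {A : Type*} [Fintype A] (p q : A → ℝ) : ℝ :=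
  ∑ a, p a * Real.log (p a / q a)

/-- Total variation distance between two distributions on a finite set. -/
noncomputable def tvFin {S : Type*} [Fintype S] (p q : S → ℝ) : ℝ :=
  (1 / 2) * ∑ s, |p s - q s|

/-- `π` is a (Markovian, time-inhomogeneous) policy: a distribution over
actions for each step and state. -/
def IsPolicy {S A : Type*} [Fintype A] (π : ℕ → S → A → ℝ) : Prop :=
  ∀ h s, (∀ a, 0 ≤ π h s a) ∧ (∑ a, π h s a) = 1

/-- Policy-regularized value of policy `π` under a fixed transition-kernel
family `P`, defined by backward recursion; `n` is the number of remaining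
steps, so that the value at step `h` is obtained with fuel `n = H − h`. -/
noncomputable def Vval {S A : Type*} [Fintype S] [Fintype A]
    (H : ℕ) (r : ℕ → S → A → ℝ) (π πref : ℕ → S → A → ℝ) (η : ℝ)
    (P : ℕ → S → A → S → ℝ) : ℕ → S → ℝ
  | 0, _ => 0
  | n + 1, s =>
      (∑ a, π (H - (n + 1)) s a *
        (r (H - (n + 1)) s a +
          ∑ s', P (H - (n + 1)) s a s' * Vval H r π πref η P n s'))
      - (1 / η) * klFin (π (H - (n + 1)) s) (πref (H - (n + 1)) s)

/-- Membership of a distribution `p` in the `d`-rectangular TV uncertainty set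
`U_h^ρ(s,a; μ⁰_h)`: `p = ⟨φ(s,a), μ⟩` for factor distributions `μ_i` within TV
distance `ρ` of the nominal factors `μ⁰_{h,i}`. -/
def InUncertaintySet {S A : Type*} [Fintype S] [Fintype A] (d : ℕ)
    (φ : S → A → Fin d → ℝ) (μ0 : ℕ → Fin d → S → ℝ) (ρ : ℝ)
    (h : ℕ) (s : S) (a : A) (p : S → ℝ) : Prop :=
  ∃ μ : Fin d → S → ℝ,
    (∀ i, (∀ t, 0 ≤ μ i t) ∧ (∑ t, μ i t) = 1 ∧ tvFin (μ i) (μ0 h i) ≤ ρ) ∧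
    ∀ s', p s' = ∑ i, φ s a i * μ i s'

/-- The set of admissible transition-kernel families: at every step before the
horizon the kernel at each state-action pair lies in the uncertainty set. -/
def Admissible {S A : Type*} [Fintype S] [Fintype A] (d : ℕ)
    (φ : S → A → Fin d → ℝ) (μ0 : ℕ → Fin d → S → ℝ) (ρ : ℝ) (H : ℕ) :
    Set (ℕ → S → A → S → ℝ) :=
  {P | ∀ h s a, h < H → InUncertaintySet d φ μ0 ρ h s a (P h s a)}

/-- Policy-regularized robust value function
`Ṽ_h^{π,ρ}(s) = inf_{P ∈ U^ρ(P⁰)} V_h^{π,P}(s)`. -/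
noncomputable def Vrob {S A : Type*} [Fintype S] [Fintype A] (d : ℕ)
    (φ : S → A → Fin d → ℝ) (μ0 : ℕ → Fin d → S → ℝ) (ρ : ℝ)
    (H : ℕ) (r : ℕ → S → A → ℝ) (π πref : ℕ → S → A → ℝ) (η : ℝ)
    (h : ℕ) (s : S) : ℝ :=
  ⨅ P : Admissible d φ μ0 ρ H, Vval H r π πref η P.1 (H - h) s

/-- Policy-regularized robust Q-function
`Q̃_h^{π,ρ}(s,a) = r_h(s,a) + inf_{P} E_{s'∼P_h(·|s,a)}[V_{h+1}^{π,P}(s')]`. -/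
noncomputable def Qrob {S A : Type*} [Fintype S] [Fintype A] (d : ℕ)
    (φ : S → A → Fin d → ℝ) (μ0 : ℕ → Fin d → S → ℝ) (ρ : ℝ)
    (H : ℕ) (r : ℕ → S → A → ℝ) (π πref : ℕ → S → A → ℝ) (η : ℝ)
    (h : ℕ) (s : S) (a : A) : ℝ :=
  r h s a + ⨅ P : Admissible d φ μ0 ρ H,
    ∑ s', P.1 h s a s' * Vval H r π πref η P.1 (H - (h + 1)) s'



open Finset



section Aux
variable {A : Type*} [Fintype A] [Nonempty A]

lemma sum_pos' (q : A → ℝ) (hq : ∀ a, 0 < q a) : 0 < ∑ a, q a :=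
  Finset.sum_pos (fun a _ => hq a) univ_nonempty

set_option linter.unusedSectionVars false
lemma klFin_self (p : A → ℝ) : klFin p p = 0 := by
  unfold klFin
  apply Finset.sum_eq_zero
  intro a _
  rcases eq_or_ne (p a) 0 with h | h
  · simp [h]
  · rw [div_self h, Real.log_one, mul_zero]

lemma klFin_nonneg (p q : A → ℝ) (hp : ∀ a, 0 ≤ p a) (hq : ∀ a, 0 < q a)
    (hps : ∑ a, p a = 1) (hqs : ∑ a, q a = 1) : 0 ≤ klFin p q := by
  have key : ∀ a, p a - q a ≤ p a * Real.log (p a / q a) := by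
    intro a
    rcases eq_or_lt_of_le (hp a) with h | h
    · simp [← h]; linarith [(hq a).le]
    · have hd : 0 < q a / p a := div_pos (hq a) h
      have h2 := Real.log_le_sub_one_of_pos hd
      have hlog : Real.log (q a / p a) = - Real.log (p a / q a) := by
        rw [← Real.log_inv]
        congr 1
        rw [inv_div]
      rw [hlog] at h2
      have h3 : 1 - q a / p a ≤ Real.log (p a / q a) := by linarith
      have h4 := mul_le_mul_of_nonneg_left h3 h.le
      have h5 : p a * (1 - q a / p a) = p a - q a := by field_simp
      linarith
  calc (0:ℝ) = ∑ a, (p a - q a) := by rw [Finset.sum_sub_distrib, hps, hqs]; ring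
    _ ≤ _ := Finset.sum_le_sum (fun a _ => key a)

lemma klFin_gibbs (η : ℝ) (q Q p : A → ℝ) (hq : ∀ a, 0 < q a) :
    klFin p (fun a => q a * Real.exp (η * Q a) / ∑ a', q a' * Real.exp (η * Q a'))
      = klFin p q + (∑ a, p a) * Real.log (∑ a', q a' * Real.exp (η * Q a'))
        - η * ∑ a, p a * Q a := by
  have hZ : 0 < ∑ a', q a' * Real.exp (η * Q a') :=
    sum_pos' _ (fun a => mul_pos (hq a) (Real.exp_pos _))
  unfold klFin
  rw [Finset.sum_mul, mul_comm η, Finset.sum_mul, ← Finset.sum_add_distrib,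
    ← Finset.sum_sub_distrib]
  apply Finset.sum_congr rfl
  intro a _
  rcases eq_or_ne (p a) 0 with h | h
  · simp [h]
  · have hpa : p a ≠ 0 := h
    have he : Real.exp (η * Q a) ≠ 0 := (Real.exp_pos _).ne'
    rw [div_div_eq_mul_div, Real.log_div (mul_ne_zero hpa hZ.ne') (mul_ne_zero (hq a).ne' he),
      Real.log_mul hpa hZ.ne', Real.log_mul (hq a).ne' he, Real.log_exp,
      Real.log_div hpa (hq a).ne']
    ring

end Aux
set_option linter.unusedSectionVars false
section Aux2
variable {A : Type*} [Fintype A] [Nonempty A]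

lemma gibbs_nonneg (η : ℝ) (q Q : A → ℝ) (hq : ∀ a, 0 < q a) (a : A) :
    0 ≤ q a * Real.exp (η * Q a) / ∑ a', q a' * Real.exp (η * Q a') := by
  have hZ : 0 < ∑ a', q a' * Real.exp (η * Q a') :=
    sum_pos' _ (fun a => mul_pos (hq a) (Real.exp_pos _))
  exact div_nonneg (mul_nonneg (hq a).le (Real.exp_pos _).le) hZ.le

lemma gibbs_sum (η : ℝ) (q Q : A → ℝ) (hq : ∀ a, 0 < q a) :
    ∑ a, q a * Real.exp (η * Q a) / ∑ a', q a' * Real.exp (η * Q a') = 1 := by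
  have hZ : 0 < ∑ a', q a' * Real.exp (η * Q a') :=
    sum_pos' _ (fun a => mul_pos (hq a) (Real.exp_pos _))
  rw [← Finset.sum_div, div_self hZ.ne']

lemma dv_le (η : ℝ) (hη : 0 < η) (q Q p : A → ℝ) (hq : ∀ a, 0 < q a)
    (hp : ∀ a, 0 ≤ p a) (hps : ∑ a, p a = 1) :
    ∑ a, p a * Q a - (1/η) * klFin p q
      ≤ (1/η) * Real.log (∑ a, q a * Real.exp (η * Q a)) := by
  have hZ : 0 < ∑ a', q a' * Real.exp (η * Q a') :=
    sum_pos' _ (fun a => mul_pos (hq a) (Real.exp_pos _))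
  have hgpos : ∀ a, 0 < q a * Real.exp (η * Q a) / ∑ a', q a' * Real.exp (η * Q a') :=
    fun a => div_pos (mul_pos (hq a) (Real.exp_pos _)) hZ
  have h0 : 0 ≤ klFin p (fun a => q a * Real.exp (η * Q a) / ∑ a', q a' * Real.exp (η * Q a')) :=
    klFin_nonneg p _ hp hgpos hps (gibbs_sum η q Q hq)
  have hid := klFin_gibbs η q Q p hq
  rw [hps, one_mul] at hid
  have key : η * (∑ a, p a * Q a) - klFin p q ≤ Real.log (∑ a', q a' * Real.exp (η * Q a')) := by
    linarith
  have h2 : ∑ a, p a * Q a - (1/η) * klFin p q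
      = (1/η) * (η * (∑ a, p a * Q a) - klFin p q) := by
    field_simp
  rw [h2]
  exact mul_le_mul_of_nonneg_left key (by positivity)

lemma dv_eq (η : ℝ) (hη : 0 < η) (q Q : A → ℝ) (hq : ∀ a, 0 < q a) :
    ∑ a, (q a * Real.exp (η * Q a) / ∑ a', q a' * Real.exp (η * Q a')) * Q a
      - (1/η) * klFin (fun a => q a * Real.exp (η * Q a) / ∑ a', q a' * Real.exp (η * Q a')) q
      = (1/η) * Real.log (∑ a, q a * Real.exp (η * Q a)) := by
  have hid := klFin_gibbs η q Q
    (fun a => q a * Real.exp (η * Q a) / ∑ a', q a' * Real.exp (η * Q a')) hq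
  rw [klFin_self, gibbs_sum η q Q hq, one_mul] at hid
  have hη' : η ≠ 0 := hη.ne'
  have : klFin (fun a => q a * Real.exp (η * Q a) / ∑ a', q a' * Real.exp (η * Q a')) q
      = η * (∑ a, (q a * Real.exp (η * Q a) / ∑ a', q a' * Real.exp (η * Q a')) * Q a)
        - Real.log (∑ a, q a * Real.exp (η * Q a)) := by linarith
  rw [this]
  field_simp
  ring

lemma klFin_le_sum_neg_log (p q : A → ℝ) (hp : ∀ a, 0 ≤ p a) (hp1 : ∀ a, p a ≤ 1)
    (hq : ∀ a, 0 < q a) (hq1 : ∀ a, q a ≤ 1) :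
    klFin p q ≤ ∑ a, -Real.log (q a) := by
  apply Finset.sum_le_sum
  intro a _
  have hlq : Real.log (q a) ≤ 0 := Real.log_nonpos (hq a).le (hq1 a)
  rcases eq_or_lt_of_le (hp a) with h | h
  · simp [← h]; linarith
  · rw [Real.log_div h.ne' (hq a).ne']
    have h1 : Real.log (p a) ≤ 0 := Real.log_nonpos h.le (hp1 a)
    have h2 : p a * Real.log (p a) ≤ 0 := mul_nonpos_of_nonneg_of_nonpos h.le h1
    have h3 : p a * -Real.log (q a) ≤ 1 * -Real.log (q a) :=
      mul_le_mul_of_nonneg_right (hp1 a) (by linarith)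
    nlinarith

lemma sum_neg_log_nonneg (q : A → ℝ) (hq : ∀ a, 0 < q a) (hq1 : ∀ a, q a ≤ 1) :
    0 ≤ ∑ a, -Real.log (q a) :=
  Finset.sum_nonneg fun a _ => by
    have := Real.log_nonpos (hq a).le (hq1 a); linarith

end Aux2
section Main
set_option linter.unusedSectionVars false
variable {S A : Type*} [Fintype S] [Fintype A] [Nonempty S] [Nonempty A]

lemma U_nonneg {d : ℕ} {φ : S → A → Fin d → ℝ} {μ0 : ℕ → Fin d → S → ℝ} {ρ : ℝ}
    (hφpos : ∀ s a i, 0 ≤ φ s a i) {h : ℕ} {s : S} {a : A} {p : S → ℝ}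
    (hp : InUncertaintySet d φ μ0 ρ h s a p) : ∀ s', 0 ≤ p s' := by
  obtain ⟨μ, hμ, hps⟩ := hp
  intro s'
  rw [hps s']
  exact Finset.sum_nonneg fun i _ => mul_nonneg (hφpos s a i) ((hμ i).1 s')

lemma U_sum {d : ℕ} {φ : S → A → Fin d → ℝ} {μ0 : ℕ → Fin d → S → ℝ} {ρ : ℝ}
    (hφsum : ∀ s a, ∑ i, φ s a i = 1) {h : ℕ} {s : S} {a : A} {p : S → ℝ}
    (hp : InUncertaintySet d φ μ0 ρ h s a p) : ∑ s', p s' = 1 := by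
  obtain ⟨μ, hμ, hps⟩ := hp
  have : ∑ s', p s' = ∑ s', ∑ i, φ s a i * μ i s' := by
    exact Finset.sum_congr rfl fun s' _ => hps s'
  rw [this, Finset.sum_comm]
  have : ∀ i ∈ univ, ∑ s', φ s a i * μ i s' = φ s a i := by
    intro i _
    rw [← Finset.mul_sum, (hμ i).2.1, mul_one]
  rw [Finset.sum_congr rfl this, hφsum]

lemma nominal_mem {d : ℕ} {φ : S → A → Fin d → ℝ} {μ0 : ℕ → Fin d → S → ℝ} {ρ : ℝ}
    (hμ0 : ∀ h i, (∀ s, 0 ≤ μ0 h i s) ∧ (∑ s, μ0 h i s) = 1) (hρ : 0 ≤ ρ)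
    (h : ℕ) (s : S) (a : A) :
    InUncertaintySet d φ μ0 ρ h s a (fun s' => ∑ i, φ s a i * μ0 h i s') := by
  refine ⟨μ0 h, fun i => ⟨(hμ0 h i).1, (hμ0 h i).2, ?_⟩, fun s' => rfl⟩
  simp [tvFin, hρ]

lemma U_nonempty {d : ℕ} {φ : S → A → Fin d → ℝ} {μ0 : ℕ → Fin d → S → ℝ} {ρ : ℝ}
    (hμ0 : ∀ h i, (∀ s, 0 ≤ μ0 h i s) ∧ (∑ s, μ0 h i s) = 1) (hρ : 0 ≤ ρ)
    (h : ℕ) (s : S) (a : A) :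
    Nonempty {p : S → ℝ // InUncertaintySet d φ μ0 ρ h s a p} :=
  ⟨⟨_, nominal_mem hμ0 hρ h s a⟩⟩

noncomputable def Dinf (d : ℕ) (φ : S → A → Fin d → ℝ) (μ0 : ℕ → Fin d → S → ℝ) (ρ : ℝ)
    (h : ℕ) (s : S) (a : A) (f : S → ℝ) : ℝ :=
  ⨅ p : {p : S → ℝ // InUncertaintySet d φ μ0 ρ h s a p}, ∑ s', p.1 s' * f s'

lemma sum_mul_ge_neg (p f : S → ℝ) (hp : ∀ s, 0 ≤ p s) (hp1 : ∑ s, p s = 1) :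
    -∑ s', |f s'| ≤ ∑ s', p s' * f s' := by
  rw [← Finset.sum_neg_distrib]
  apply Finset.sum_le_sum
  intro s' _
  have hle : p s' ≤ 1 := by
    have := Finset.single_le_sum (f := p) (fun i _ => hp i) (mem_univ s')
    linarith
  have h1 : p s' * (-|f s'|) ≤ p s' * f s' :=
    mul_le_mul_of_nonneg_left (neg_abs_le (f s')) (hp s')
  have h2 : p s' * |f s'| ≤ 1 * |f s'| :=
    mul_le_mul_of_nonneg_right hle (abs_nonneg _)
  nlinarith

lemma Dinf_bddBelow {d : ℕ} {φ : S → A → Fin d → ℝ} {μ0 : ℕ → Fin d → S → ℝ} {ρ : ℝ}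
    (hφpos : ∀ s a i, 0 ≤ φ s a i) (hφsum : ∀ s a, ∑ i, φ s a i = 1)
    (h : ℕ) (s : S) (a : A) (f : S → ℝ) :
    BddBelow (Set.range fun p : {p : S → ℝ // InUncertaintySet d φ μ0 ρ h s a p} =>
      ∑ s', p.1 s' * f s') := by
  refine ⟨-∑ s', |f s'|, ?_⟩
  rintro x ⟨p, rfl⟩
  exact sum_mul_ge_neg p.1 f (U_nonneg hφpos p.2) (U_sum hφsum p.2)

lemma Dinf_le {d : ℕ} {φ : S → A → Fin d → ℝ} {μ0 : ℕ → Fin d → S → ℝ} {ρ : ℝ}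
    (hφpos : ∀ s a i, 0 ≤ φ s a i) (hφsum : ∀ s a, ∑ i, φ s a i = 1)
    {h : ℕ} {s : S} {a : A} {p : S → ℝ} (hp : InUncertaintySet d φ μ0 ρ h s a p)
    (f : S → ℝ) : Dinf d φ μ0 ρ h s a f ≤ ∑ s', p s' * f s' :=
  ciInf_le (Dinf_bddBelow hφpos hφsum h s a f) ⟨p, hp⟩

lemma Dinf_exists_lt {d : ℕ} {φ : S → A → Fin d → ℝ} {μ0 : ℕ → Fin d → S → ℝ} {ρ : ℝ}
    (hμ0 : ∀ h i, (∀ s, 0 ≤ μ0 h i s) ∧ (∑ s, μ0 h i s) = 1) (hρ : 0 ≤ ρ)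
    (h : ℕ) (s : S) (a : A) (f : S → ℝ) {δ : ℝ} (hδ : 0 < δ) :
    ∃ p : S → ℝ, InUncertaintySet d φ μ0 ρ h s a p ∧
      ∑ s', p s' * f s' < Dinf d φ μ0 ρ h s a f + δ := by
  haveI := U_nonempty (φ := φ) hμ0 hρ h s a
  obtain ⟨p, hp⟩ := exists_lt_of_ciInf_lt (f := fun p : {p : S → ℝ //
      InUncertaintySet d φ μ0 ρ h s a p} => ∑ s', p.1 s' * f s')
    (show _ < Dinf d φ μ0 ρ h s a f + δ from lt_add_of_pos_right _ hδ)
  exact ⟨p.1, p.2, hp⟩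

end Main
section Main2
set_option linter.unusedSectionVars false
variable {S A : Type*} [Fintype S] [Fintype A] [Nonempty S] [Nonempty A]

noncomputable def Vstar (d : ℕ) (φ : S → A → Fin d → ℝ) (μ0 : ℕ → Fin d → S → ℝ)
    (ρ : ℝ) (H : ℕ) (r : ℕ → S → A → ℝ) (πref : ℕ → S → A → ℝ) (η : ℝ) :
    ℕ → S → ℝ
  | 0, _ => 0
  | (n+1), s =>
      (1/η) * Real.log (∑ a, πref (H-(n+1)) s a *
        Real.exp (η * (r (H-(n+1)) s a +
          Dinf d φ μ0 ρ (H-(n+1)) s a (Vstar d φ μ0 ρ H r πref η n))))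

noncomputable def Qtop (d : ℕ) (φ : S → A → Fin d → ℝ) (μ0 : ℕ → Fin d → S → ℝ)
    (ρ : ℝ) (H : ℕ) (r : ℕ → S → A → ℝ) (πref : ℕ → S → A → ℝ) (η : ℝ)
    (h : ℕ) (s : S) (a : A) : ℝ :=
  r h s a + Dinf d φ μ0 ρ h s a (Vstar d φ μ0 ρ H r πref η (H - (h+1)))

noncomputable def Pistar (d : ℕ) (φ : S → A → Fin d → ℝ) (μ0 : ℕ → Fin d → S → ℝ)
    (ρ : ℝ) (H : ℕ) (r : ℕ → S → A → ℝ) (πref : ℕ → S → A → ℝ) (η : ℝ)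
    (h : ℕ) (s : S) (a : A) : ℝ :=
  πref h s a * Real.exp (η * Qtop d φ μ0 ρ H r πref η h s a) /
    ∑ a', πref h s a' * Real.exp (η * Qtop d φ μ0 ρ H r πref η h s a')

lemma Qtop_eq (d : ℕ) (φ : S → A → Fin d → ℝ) (μ0 : ℕ → Fin d → S → ℝ)
    (ρ : ℝ) (H : ℕ) (r : ℕ → S → A → ℝ) (πref : ℕ → S → A → ℝ) (η : ℝ)
    {n : ℕ} (hn : n + 1 ≤ H) (s : S) (a : A) :
    Qtop d φ μ0 ρ H r πref η (H-(n+1)) s a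
      = r (H-(n+1)) s a + Dinf d φ μ0 ρ (H-(n+1)) s a (Vstar d φ μ0 ρ H r πref η n) := by
  unfold Qtop
  rw [show H - (H-(n+1)+1) = n from by omega]

lemma Vstar_succ_eq (d : ℕ) (φ : S → A → Fin d → ℝ) (μ0 : ℕ → Fin d → S → ℝ)
    (ρ : ℝ) (H : ℕ) (r : ℕ → S → A → ℝ) (πref : ℕ → S → A → ℝ) (η : ℝ)
    {n : ℕ} (hn : n + 1 ≤ H) (s : S) :
    Vstar d φ μ0 ρ H r πref η (n+1) s
      = (1/η) * Real.log (∑ a, πref (H-(n+1)) s a *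
          Real.exp (η * Qtop d φ μ0 ρ H r πref η (H-(n+1)) s a)) := by
  show (1/η) * Real.log (∑ a, πref (H-(n+1)) s a *
        Real.exp (η * (r (H-(n+1)) s a +
          Dinf d φ μ0 ρ (H-(n+1)) s a (Vstar d φ μ0 ρ H r πref η n)))) = _
  congr 2
  apply Finset.sum_congr rfl
  intro a _
  rw [Qtop_eq d φ μ0 ρ H r πref η hn]

lemma Pistar_policy (d : ℕ) (φ : S → A → Fin d → ℝ) (μ0 : ℕ → Fin d → S → ℝ)
    (ρ : ℝ) (H : ℕ) (r : ℕ → S → A → ℝ) (πref : ℕ → S → A → ℝ) (η : ℝ)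
    (hπrefpos : ∀ h s a, 0 < πref h s a) :
    IsPolicy (Pistar d φ μ0 ρ H r πref η) := by
  intro h s
  constructor
  · intro a
    exact gibbs_nonneg η (πref h s) (fun a => Qtop d φ μ0 ρ H r πref η h s a)
      (fun a => hπrefpos h s a) a
  · exact gibbs_sum η (πref h s) (fun a => Qtop d φ μ0 ρ H r πref η h s a)
      (fun a => hπrefpos h s a)

lemma dist_le_one (p : A → ℝ) (hp : ∀ a, 0 ≤ p a) (hs : ∑ a, p a = 1) (a : A) :
    p a ≤ 1 := by
  have := Finset.single_le_sum (f := p) (fun i _ => hp i) (mem_univ a)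
  linarith

lemma klFin_le_B (H : ℕ) (πref : ℕ → S → A → ℝ) (hπref : IsPolicy πref)
    (hπrefpos : ∀ h s a, 0 < πref h s a) {h : ℕ} (hh : h < H) (s : S)
    (p : A → ℝ) (hp0 : ∀ a, 0 ≤ p a) (hp1 : ∑ a, p a = 1) :
    klFin p (πref h s)
      ≤ ∑ h' ∈ Finset.range H, ∑ s', ∑ a, -Real.log (πref h' s' a) := by
  have step1 : klFin p (πref h s) ≤ ∑ a, -Real.log (πref h s a) :=
    klFin_le_sum_neg_log p (πref h s) hp0 (dist_le_one p hp0 hp1)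
      (fun a => hπrefpos h s a)
      (fun a => dist_le_one _ (hπref h s).1 (hπref h s).2 a)
  have hterm : ∀ h' s', 0 ≤ ∑ a, -Real.log (πref h' s' a) := fun h' s' =>
    sum_neg_log_nonneg _ (fun a => hπrefpos h' s' a)
      (fun a => dist_le_one _ (hπref h' s').1 (hπref h' s').2 a)
  have step2 : ∑ a, -Real.log (πref h s a) ≤ ∑ s', ∑ a, -Real.log (πref h s' a) :=
    Finset.single_le_sum (f := fun s' => ∑ a, -Real.log (πref h s' a))
      (fun s' _ => hterm h s') (mem_univ s)
  have step3 : ∑ s', ∑ a, -Real.log (πref h s' a)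
      ≤ ∑ h' ∈ Finset.range H, ∑ s', ∑ a, -Real.log (πref h' s' a) :=
    Finset.single_le_sum (f := fun h' => ∑ s', ∑ a, -Real.log (πref h' s' a))
      (fun h' _ => Finset.sum_nonneg fun s' _ => hterm h' s')
      (Finset.mem_range.mpr hh)
  linarith

lemma B_nonneg (H : ℕ) (πref : ℕ → S → A → ℝ) (hπref : IsPolicy πref)
    (hπrefpos : ∀ h s a, 0 < πref h s a) :
    0 ≤ ∑ h' ∈ Finset.range H, ∑ s' : S, ∑ a : A, -Real.log (πref h' s' a) :=
  Finset.sum_nonneg fun h' _ => Finset.sum_nonneg fun s' _ =>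
    sum_neg_log_nonneg _ (fun a => hπrefpos h' s' a)
      (fun a => dist_le_one _ (hπref h' s').1 (hπref h' s').2 a)

end Main2
section Main3
set_option linter.unusedSectionVars false
set_option maxHeartbeats 1000000
variable {S A : Type*} [Fintype S] [Fintype A] [Nonempty S] [Nonempty A]
variable {d : ℕ} {φ : S → A → Fin d → ℝ} {μ0 : ℕ → Fin d → S → ℝ} {ρ : ℝ}
variable {H : ℕ} {r : ℕ → S → A → ℝ} {η : ℝ} {πref : ℕ → S → A → ℝ}

lemma sum_weight_add_const (w g : A → ℝ) (hw : ∑ a, w a = 1) (c : ℝ) :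
    ∑ a, w a * (g a + c) = (∑ a, w a * g a) + c := by
  simp only [mul_add]
  rw [Finset.sum_add_distrib, ← Finset.sum_mul, hw, one_mul]

lemma Vval_lower (hφpos : ∀ s a i, 0 ≤ φ s a i) (hφsum : ∀ s a, ∑ i, φ s a i = 1)
    (hr : ∀ h s a, (0:ℝ) ≤ r h s a) (hη : 0 < η)
    (hπref : IsPolicy πref) (hπrefpos : ∀ h s a, 0 < πref h s a)
    (π : ℕ → S → A → ℝ) (hπ : IsPolicy π)
    (P : ℕ → S → A → S → ℝ) (hP : P ∈ Admissible d φ μ0 ρ H) :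
    ∀ n, n ≤ H → ∀ s,
      -(n : ℝ) * ((1/η) * (∑ h' ∈ Finset.range H, ∑ s', ∑ a, -Real.log (πref h' s' a)))
        ≤ Vval H r π πref η P n s := by
  intro n
  induction n with
  | zero => intro _ s; simp [Vval]
  | succ n ih =>
    intro hn s
    have hn' : n ≤ H := by omega
    have hh : H - (n+1) < H := by omega
    set B : ℝ := ∑ h' ∈ Finset.range H, ∑ s', ∑ a, -Real.log (πref h' s' a) with hB
    have hinner : ∀ a, -(n:ℝ) * ((1/η)*B)
        ≤ ∑ s', P (H-(n+1)) s a s' * Vval H r π πref η P n s' := by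
      intro a
      have hmem := hP (H-(n+1)) s a hh
      have h1 : ∑ s', P (H-(n+1)) s a s' * (-(n:ℝ) * ((1/η)*B))
          ≤ ∑ s', P (H-(n+1)) s a s' * Vval H r π πref η P n s' :=
        Finset.sum_le_sum fun s' _ =>
          mul_le_mul_of_nonneg_left (ih hn' s') (U_nonneg hφpos hmem s')
      rwa [← Finset.sum_mul, U_sum hφsum hmem, one_mul] at h1
    have houter : ∀ a, π (H-(n+1)) s a * (-(n:ℝ)*((1/η)*B))
        ≤ π (H-(n+1)) s a * (r (H-(n+1)) s a
            + ∑ s', P (H-(n+1)) s a s' * Vval H r π πref η P n s') := by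
      intro a
      apply mul_le_mul_of_nonneg_left _ ((hπ _ s).1 a)
      have := hr (H-(n+1)) s a
      linarith [hinner a]
    have hsum : -(n:ℝ)*((1/η)*B) ≤ ∑ a, π (H-(n+1)) s a * (r (H-(n+1)) s a
        + ∑ s', P (H-(n+1)) s a s' * Vval H r π πref η P n s') := by
      have h2 := Finset.sum_le_sum (s := univ) (fun a _ => houter a)
      rwa [← Finset.sum_mul, (hπ _ s).2, one_mul] at h2
    have hKL : klFin (π (H-(n+1)) s) (πref (H-(n+1)) s) ≤ B :=
      klFin_le_B H πref hπref hπrefpos hh s _ ((hπ _ s).1) ((hπ _ s).2)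
    have hKL2 : (1/η) * klFin (π (H-(n+1)) s) (πref (H-(n+1)) s) ≤ (1/η) * B :=
      mul_le_mul_of_nonneg_left hKL (by positivity)
    show _ ≤ (∑ a, π (H-(n+1)) s a * (r (H-(n+1)) s a
        + ∑ s', P (H-(n+1)) s a s' * Vval H r π πref η P n s'))
      - (1/η) * klFin (π (H-(n+1)) s) (πref (H-(n+1)) s)
    push_cast
    nlinarith [hsum, hKL2]

lemma exists_Peps (hμ0 : ∀ h i, (∀ s, 0 ≤ μ0 h i s) ∧ (∑ s, μ0 h i s) = 1)
    (hρ : 0 ≤ ρ) {δ : ℝ} (hδ : 0 < δ) :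
    ∃ P : ℕ → S → A → S → ℝ, P ∈ Admissible d φ μ0 ρ H ∧ ∀ h s a,
      ∑ s', P h s a s' * Vstar d φ μ0 ρ H r πref η (H-(h+1)) s'
        < Dinf d φ μ0 ρ h s a (Vstar d φ μ0 ρ H r πref η (H-(h+1))) + δ := by
  have hex : ∀ h (s : S) (a : A), ∃ p : S → ℝ, InUncertaintySet d φ μ0 ρ h s a p ∧
      ∑ s', p s' * Vstar d φ μ0 ρ H r πref η (H-(h+1)) s'
        < Dinf d φ μ0 ρ h s a (Vstar d φ μ0 ρ H r πref η (H-(h+1))) + δ :=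
    fun h s a => Dinf_exists_lt hμ0 hρ h s a _ hδ
  choose P h1 h2 using hex
  exact ⟨P, fun h s a _ => h1 h s a, h2⟩

lemma Vval_ub (hφpos : ∀ s a i, 0 ≤ φ s a i) (hφsum : ∀ s a, ∑ i, φ s a i = 1)
    (hη : 0 < η) (hπrefpos : ∀ h s a, 0 < πref h s a)
    (π : ℕ → S → A → ℝ) (hπ : IsPolicy π)
    {δ : ℝ} (hδ : 0 < δ)
    (P : ℕ → S → A → S → ℝ) (hP : P ∈ Admissible d φ μ0 ρ H)
    (hPd : ∀ h s a, ∑ s', P h s a s' * Vstar d φ μ0 ρ H r πref η (H-(h+1)) s'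
        < Dinf d φ μ0 ρ h s a (Vstar d φ μ0 ρ H r πref η (H-(h+1))) + δ) :
    ∀ n, n ≤ H → ∀ s,
      Vval H r π πref η P n s ≤ Vstar d φ μ0 ρ H r πref η n s + n * δ := by
  intro n
  induction n with
  | zero => intro _ s; simp [Vval, Vstar]
  | succ n ih =>
    intro hn s
    have hn' : n ≤ H := by omega
    have hh : H - (n+1) < H := by omega
    have hkey : H - (H-(n+1)+1) = n := by omega
    have hinner : ∀ a, ∑ s', P (H-(n+1)) s a s' * Vval H r π πref η P n s'
        ≤ (r (H-(n+1)) s a + Dinf d φ μ0 ρ (H-(n+1)) s a (Vstar d φ μ0 ρ H r πref η n))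
            - r (H-(n+1)) s a + (n+1) * δ := by
      intro a
      have hmem := hP (H-(n+1)) s a hh
      have h1 : ∑ s', P (H-(n+1)) s a s' * Vval H r π πref η P n s'
          ≤ ∑ s', P (H-(n+1)) s a s' * (Vstar d φ μ0 ρ H r πref η n s' + n * δ) :=
        Finset.sum_le_sum fun s' _ =>
          mul_le_mul_of_nonneg_left (ih hn' s') (U_nonneg hφpos hmem s')
      have h2 : ∑ s', P (H-(n+1)) s a s' * (Vstar d φ μ0 ρ H r πref η n s' + (n:ℝ) * δ)
          = (∑ s', P (H-(n+1)) s a s' * Vstar d φ μ0 ρ H r πref η n s') + (n:ℝ) * δ :=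
        sum_weight_add_const _ _ (U_sum hφsum hmem) _
      have h3 := hPd (H-(n+1)) s a
      rw [hkey] at h3
      push_cast
      linarith
    have houter : ∑ a, π (H-(n+1)) s a * (r (H-(n+1)) s a
          + ∑ s', P (H-(n+1)) s a s' * Vval H r π πref η P n s')
        ≤ (∑ a, π (H-(n+1)) s a * (r (H-(n+1)) s a
            + Dinf d φ μ0 ρ (H-(n+1)) s a (Vstar d φ μ0 ρ H r πref η n)))
          + (n+1) * δ := by
      have h4 : ∀ a, π (H-(n+1)) s a * (r (H-(n+1)) s a
            + ∑ s', P (H-(n+1)) s a s' * Vval H r π πref η P n s')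
          ≤ π (H-(n+1)) s a * ((r (H-(n+1)) s a
              + Dinf d φ μ0 ρ (H-(n+1)) s a (Vstar d φ μ0 ρ H r πref η n)) + (n+1) * δ) := by
        intro a
        apply mul_le_mul_of_nonneg_left _ ((hπ _ s).1 a)
        have := hinner a
        linarith
      have h5 := Finset.sum_le_sum (s := univ) (fun a _ => h4 a)
      rwa [sum_weight_add_const _ _ ((hπ _ s).2)] at h5
    have hdv := dv_le η hη (πref (H-(n+1)) s)
      (fun a => r (H-(n+1)) s a + Dinf d φ μ0 ρ (H-(n+1)) s a (Vstar d φ μ0 ρ H r πref η n))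
      (π (H-(n+1)) s) (fun a => hπrefpos _ _ a) ((hπ _ s).1) ((hπ _ s).2)
    show (∑ a, π (H-(n+1)) s a * (r (H-(n+1)) s a
        + ∑ s', P (H-(n+1)) s a s' * Vval H r π πref η P n s'))
      - (1/η) * klFin (π (H-(n+1)) s) (πref (H-(n+1)) s) ≤ _
    have hVs : Vstar d φ μ0 ρ H r πref η (n+1) s
        = (1/η) * Real.log (∑ a, πref (H-(n+1)) s a *
            Real.exp (η * (r (H-(n+1)) s a
              + Dinf d φ μ0 ρ (H-(n+1)) s a (Vstar d φ μ0 ρ H r πref η n)))) := rfl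
    rw [hVs]
    push_cast
    linarith

lemma Vval_lb_star (hφpos : ∀ s a i, 0 ≤ φ s a i) (hφsum : ∀ s a, ∑ i, φ s a i = 1)
    (hη : 0 < η) (hπrefpos : ∀ h s a, 0 < πref h s a)
    (P : ℕ → S → A → S → ℝ) (hP : P ∈ Admissible d φ μ0 ρ H) :
    ∀ n, n ≤ H → ∀ s, Vstar d φ μ0 ρ H r πref η n s
      ≤ Vval H r (Pistar d φ μ0 ρ H r πref η) πref η P n s := by
  intro n
  induction n with
  | zero => intro _ s; simp [Vval, Vstar]
  | succ n ih =>
    intro hn s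
    have hn' : n ≤ H := by omega
    have hh : H - (n+1) < H := by omega
    have hinner : ∀ a, Dinf d φ μ0 ρ (H-(n+1)) s a (Vstar d φ μ0 ρ H r πref η n)
        ≤ ∑ s', P (H-(n+1)) s a s' * Vval H r (Pistar d φ μ0 ρ H r πref η) πref η P n s' := by
      intro a
      have hmem := hP (H-(n+1)) s a hh
      have h1 := Dinf_le hφpos hφsum hmem (Vstar d φ μ0 ρ H r πref η n)
      have h2 : ∑ s', P (H-(n+1)) s a s' * Vstar d φ μ0 ρ H r πref η n s'
          ≤ ∑ s', P (H-(n+1)) s a s' * Vval H r (Pistar d φ μ0 ρ H r πref η) πref η P n s' :=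
        Finset.sum_le_sum fun s' _ =>
          mul_le_mul_of_nonneg_left (ih hn' s') (U_nonneg hφpos hmem s')
      linarith
    have houter : ∑ a, Pistar d φ μ0 ρ H r πref η (H-(n+1)) s a
          * Qtop d φ μ0 ρ H r πref η (H-(n+1)) s a
        ≤ ∑ a, Pistar d φ μ0 ρ H r πref η (H-(n+1)) s a * (r (H-(n+1)) s a
            + ∑ s', P (H-(n+1)) s a s' * Vval H r (Pistar d φ μ0 ρ H r πref η) πref η P n s') := by
      apply Finset.sum_le_sum
      intro a _
      apply mul_le_mul_of_nonneg_left _ ((Pistar_policy d φ μ0 ρ H r πref η hπrefpos _ s).1 a)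
      rw [Qtop_eq d φ μ0 ρ H r πref η hn s a]
      linarith [hinner a]
    have hdv : Vstar d φ μ0 ρ H r πref η (n+1) s
        = (∑ a, Pistar d φ μ0 ρ H r πref η (H-(n+1)) s a
            * Qtop d φ μ0 ρ H r πref η (H-(n+1)) s a)
          - (1/η) * klFin (Pistar d φ μ0 ρ H r πref η (H-(n+1)) s) (πref (H-(n+1)) s) := by
      rw [Vstar_succ_eq d φ μ0 ρ H r πref η hn s,
        ← dv_eq η hη (πref (H-(n+1)) s)
          (fun a => Qtop d φ μ0 ρ H r πref η (H-(n+1)) s a) (fun a => hπrefpos _ _ a)]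
      rfl
    show _ ≤ (∑ a, Pistar d φ μ0 ρ H r πref η (H-(n+1)) s a * (r (H-(n+1)) s a
        + ∑ s', P (H-(n+1)) s a s' * Vval H r (Pistar d φ μ0 ρ H r πref η) πref η P n s'))
      - (1/η) * klFin (Pistar d φ μ0 ρ H r πref η (H-(n+1)) s) (πref (H-(n+1)) s)
    rw [hdv]
    linarith

end Main3
section Main4
set_option linter.unusedSectionVars false
set_option maxHeartbeats 1000000
variable {S A : Type*} [Fintype S] [Fintype A] [Nonempty S] [Nonempty A]
variable {d : ℕ} {φ : S → A → Fin d → ℝ} {μ0 : ℕ → Fin d → S → ℝ} {ρ : ℝ}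
variable {H : ℕ} {r : ℕ → S → A → ℝ} {η : ℝ} {πref : ℕ → S → A → ℝ}

lemma Adm_nonempty (hμ0 : ∀ h i, (∀ s, 0 ≤ μ0 h i s) ∧ (∑ s, μ0 h i s) = 1)
    (hρ : 0 ≤ ρ) : Nonempty ↥(Admissible d φ μ0 ρ H (A := A)) :=
  ⟨⟨fun h s a s' => ∑ i, φ s a i * μ0 h i s',
    fun h s a _ => nominal_mem hμ0 hρ h s a⟩⟩

lemma Vrob_le_Vstar (hφpos : ∀ s a i, 0 ≤ φ s a i) (hφsum : ∀ s a, ∑ i, φ s a i = 1)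
    (hμ0 : ∀ h i, (∀ s, 0 ≤ μ0 h i s) ∧ (∑ s, μ0 h i s) = 1) (hρ : 0 ≤ ρ)
    (hr : ∀ h s a, (0:ℝ) ≤ r h s a) (hη : 0 < η)
    (hπref : IsPolicy πref) (hπrefpos : ∀ h s a, 0 < πref h s a)
    (π : ℕ → S → A → ℝ) (hπ : IsPolicy π) {h : ℕ} (hh : h ≤ H) (s : S) :
    Vrob d φ μ0 ρ H r π πref η h s ≤ Vstar d φ μ0 ρ H r πref η (H - h) s := by
  have hbdd : BddBelow (Set.range fun P : ↥(Admissible d φ μ0 ρ H) =>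
      Vval H r π πref η P.1 (H - h) s) := by
    refine ⟨-(H - h : ℕ) * ((1/η) * (∑ h' ∈ Finset.range H, ∑ s', ∑ a, -Real.log (πref h' s' a))), ?_⟩
    rintro x ⟨P, rfl⟩
    exact Vval_lower hφpos hφsum hr hη hπref hπrefpos π hπ P.1 P.2 (H - h) (by omega) s
  apply le_of_forall_pos_le_add
  intro ε hε
  have hδ : 0 < ε / (H + 1) := by positivity
  obtain ⟨P, hPadm, hPd⟩ := exists_Peps (r := r) (η := η) hμ0 hρ hδ
  have h1 : Vrob d φ μ0 ρ H r π πref η h s ≤ Vval H r π πref η P (H - h) s :=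
    ciInf_le hbdd ⟨P, hPadm⟩
  have h2 := Vval_ub hφpos hφsum hη hπrefpos π hπ hδ P hPadm hPd (H - h) (by omega) s
  have h3 : ((H - h : ℕ) : ℝ) * (ε / (H + 1)) ≤ ε := by
    rw [div_eq_mul_inv, ← mul_assoc]
    have hc : ((H - h : ℕ) : ℝ) ≤ (H : ℝ) + 1 := by
      have : (H - h : ℕ) ≤ H := by omega
      push_cast
      have := Nat.cast_le (α := ℝ) |>.mpr this
      linarith
    have hinv : (0:ℝ) < ((H:ℝ)+1)⁻¹ := by positivity
    have := mul_le_mul_of_nonneg_right (mul_le_mul_of_nonneg_right hc hε.le) hinv.le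
    calc ((H - h : ℕ) : ℝ) * ε * ((H:ℝ)+1)⁻¹ ≤ ((H:ℝ)+1) * ε * ((H:ℝ)+1)⁻¹ := this
      _ = ε := by field_simp
  linarith

lemma Vrob_star_eq (hφpos : ∀ s a i, 0 ≤ φ s a i) (hφsum : ∀ s a, ∑ i, φ s a i = 1)
    (hμ0 : ∀ h i, (∀ s, 0 ≤ μ0 h i s) ∧ (∑ s, μ0 h i s) = 1) (hρ : 0 ≤ ρ)
    (hr : ∀ h s a, (0:ℝ) ≤ r h s a) (hη : 0 < η)
    (hπref : IsPolicy πref) (hπrefpos : ∀ h s a, 0 < πref h s a)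
    {h : ℕ} (hh : h ≤ H) (s : S) :
    Vrob d φ μ0 ρ H r (Pistar d φ μ0 ρ H r πref η) πref η h s
      = Vstar d φ μ0 ρ H r πref η (H - h) s := by
  haveI := Adm_nonempty (φ := φ) (H := H) hμ0 hρ
  apply le_antisymm
  · exact Vrob_le_Vstar hφpos hφsum hμ0 hρ hr hη hπref hπrefpos _
      (Pistar_policy d φ μ0 ρ H r πref η hπrefpos) hh s
  · exact le_ciInf fun P =>
      Vval_lb_star hφpos hφsum hη hπrefpos P.1 P.2 (H - h) (by omega) s

lemma Qrob_le_Qtop (hφpos : ∀ s a i, 0 ≤ φ s a i) (hφsum : ∀ s a, ∑ i, φ s a i = 1)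
    (hμ0 : ∀ h i, (∀ s, 0 ≤ μ0 h i s) ∧ (∑ s, μ0 h i s) = 1) (hρ : 0 ≤ ρ)
    (hr : ∀ h s a, (0:ℝ) ≤ r h s a) (hη : 0 < η)
    (hπref : IsPolicy πref) (hπrefpos : ∀ h s a, 0 < πref h s a)
    (π : ℕ → S → A → ℝ) (hπ : IsPolicy π) {h : ℕ} (hh : h < H) (s : S) (a : A) :
    Qrob d φ μ0 ρ H r π πref η h s a ≤ Qtop d φ μ0 ρ H r πref η h s a := by
  have hbdd : BddBelow (Set.range fun P : ↥(Admissible d φ μ0 ρ H) =>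
      ∑ s', P.1 h s a s' * Vval H r π πref η P.1 (H - (h+1)) s') := by
    refine ⟨-(H - (h+1) : ℕ) * ((1/η) * (∑ h' ∈ Finset.range H, ∑ s', ∑ a, -Real.log (πref h' s' a))), ?_⟩
    rintro x ⟨P, rfl⟩
    have hmem := P.2 h s a hh
    have h1 : ∀ s', P.1 h s a s' * (-(H - (h+1) : ℕ) * ((1/η) * (∑ h' ∈ Finset.range H, ∑ s', ∑ a, -Real.log (πref h' s' a))))
        ≤ P.1 h s a s' * Vval H r π πref η P.1 (H - (h+1)) s' := fun s' =>
      mul_le_mul_of_nonneg_left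
        (Vval_lower hφpos hφsum hr hη hπref hπrefpos π hπ P.1 P.2 (H - (h+1)) (by omega) s')
        (U_nonneg hφpos hmem s')
    have h2 := Finset.sum_le_sum (s := univ) (fun s' _ => h1 s')
    rwa [← Finset.sum_mul, U_sum hφsum hmem, one_mul] at h2
  unfold Qrob Qtop
  have main : (⨅ P : ↥(Admissible d φ μ0 ρ H),
      ∑ s', P.1 h s a s' * Vval H r π πref η P.1 (H - (h+1)) s')
      ≤ Dinf d φ μ0 ρ h s a (Vstar d φ μ0 ρ H r πref η (H - (h+1))) := by
    apply le_of_forall_pos_le_add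
    intro ε hε
    have hδ : 0 < ε / (H + 1) := by positivity
    obtain ⟨P, hPadm, hPd⟩ := exists_Peps (r := r) (η := η) hμ0 hρ hδ
    have h1 : (⨅ P : ↥(Admissible d φ μ0 ρ H),
        ∑ s', P.1 h s a s' * Vval H r π πref η P.1 (H - (h+1)) s')
        ≤ ∑ s', P h s a s' * Vval H r π πref η P (H - (h+1)) s' :=
      ciInf_le hbdd ⟨P, hPadm⟩
    have hmem := hPadm h s a hh
    have h2 : ∑ s', P h s a s' * Vval H r π πref η P (H - (h+1)) s'
        ≤ ∑ s', P h s a s' * (Vstar d φ μ0 ρ H r πref η (H - (h+1)) s'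
            + (H - (h+1) : ℕ) * (ε / (H+1))) :=
      Finset.sum_le_sum fun s' _ => mul_le_mul_of_nonneg_left
        (Vval_ub hφpos hφsum hη hπrefpos π hπ hδ P hPadm hPd (H - (h+1)) (by omega) s')
        (U_nonneg hφpos hmem s')
    rw [sum_weight_add_const _ _ (U_sum hφsum hmem)] at h2
    have h3 := hPd h s a
    have h4 : ((H - (h+1) : ℕ) : ℝ) * (ε / (H+1)) + ε / (H+1) ≤ ε := by
      have hc : ((H - (h+1) : ℕ) : ℝ) + 1 ≤ (H : ℝ) + 1 := by
        have : (H - (h+1) : ℕ) ≤ H := by omega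
        have := Nat.cast_le (α := ℝ) |>.mpr this
        linarith
      have h5 : ((H - (h+1) : ℕ) : ℝ) * (ε / (H+1)) + ε / (H+1)
          = (((H - (h+1) : ℕ) : ℝ) + 1) * (ε / (H+1)) := by ring
      rw [h5]
      calc (((H - (h+1) : ℕ) : ℝ) + 1) * (ε / (H+1)) ≤ ((H:ℝ)+1) * (ε / (H+1)) :=
            mul_le_mul_of_nonneg_right hc hδ.le
        _ = ε := by field_simp
    linarith
  linarith

lemma Qrob_star_eq (hφpos : ∀ s a i, 0 ≤ φ s a i) (hφsum : ∀ s a, ∑ i, φ s a i = 1)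
    (hμ0 : ∀ h i, (∀ s, 0 ≤ μ0 h i s) ∧ (∑ s, μ0 h i s) = 1) (hρ : 0 ≤ ρ)
    (hr : ∀ h s a, (0:ℝ) ≤ r h s a) (hη : 0 < η)
    (hπref : IsPolicy πref) (hπrefpos : ∀ h s a, 0 < πref h s a)
    {h : ℕ} (hh : h < H) (s : S) (a : A) :
    Qrob d φ μ0 ρ H r (Pistar d φ μ0 ρ H r πref η) πref η h s a
      = Qtop d φ μ0 ρ H r πref η h s a := by
  haveI := Adm_nonempty (φ := φ) (H := H) hμ0 hρ
  apply le_antisymm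
  · exact Qrob_le_Qtop hφpos hφsum hμ0 hρ hr hη hπref hπrefpos _
      (Pistar_policy d φ μ0 ρ H r πref η hπrefpos) hh s a
  · unfold Qrob Qtop
    have main : Dinf d φ μ0 ρ h s a (Vstar d φ μ0 ρ H r πref η (H - (h+1)))
        ≤ ⨅ P : ↥(Admissible d φ μ0 ρ H), ∑ s', P.1 h s a s' *
            Vval H r (Pistar d φ μ0 ρ H r πref η) πref η P.1 (H - (h+1)) s' := by
      apply le_ciInf
      intro P
      have hmem := P.2 h s a hh
      have h1 := Dinf_le hφpos hφsum hmem (Vstar d φ μ0 ρ H r πref η (H - (h+1)))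
      have h2 : ∑ s', P.1 h s a s' * Vstar d φ μ0 ρ H r πref η (H - (h+1)) s'
          ≤ ∑ s', P.1 h s a s' * Vval H r (Pistar d φ μ0 ρ H r πref η) πref η P.1 (H - (h+1)) s' :=
        Finset.sum_le_sum fun s' _ => mul_le_mul_of_nonneg_left
          (Vval_lb_star hφpos hφsum hη hπrefpos P.1 P.2 (H - (h+1)) (by omega) s')
          (U_nonneg hφpos hmem s')
      linarith
    linarith

end Main4
/-- Existence and closed form of the optimal policy in the policy-regularized
`d`-rectangular DRMDP: there is a policy `π*` achieving
`Ṽ_h^{π*,ρ} = sup_π Ṽ_h^{π,ρ}` and `Q̃_h^{π*,ρ} = sup_π Q̃_h^{π,ρ}`, of the Gibbs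
form `π*_h(a|s) ∝ π_ref_h(a|s)·exp(η·Q̃_h^{*,ρ}(s,a))`. -/
theorem exists_optimal_policy_regularized_drmdp {S A : Type*} [Fintype S]
    [Fintype A] [Nonempty S] [Nonempty A] (d : ℕ)
    (φ : S → A → Fin d → ℝ) (hφpos : ∀ s a i, 0 ≤ φ s a i)
    (hφsum : ∀ s a, ∑ i, φ s a i = 1)
    (μ0 : ℕ → Fin d → S → ℝ)
    (hμ0 : ∀ h i, (∀ s, 0 ≤ μ0 h i s) ∧ (∑ s, μ0 h i s) = 1)
    (ρ : ℝ) (hρ : ρ ∈ Set.Ioc (0 : ℝ) 1)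
    (H : ℕ) (r : ℕ → S → A → ℝ) (hr : ∀ h s a, r h s a ∈ Set.Icc (0 : ℝ) 1)
    (η : ℝ) (hη : 0 < η)
    (πref : ℕ → S → A → ℝ) (hπref : IsPolicy πref)
    (hπrefpos : ∀ h s a, 0 < πref h s a) :
    ∃ πstar : ℕ → S → A → ℝ, IsPolicy πstar ∧
      ∀ h < H, ∀ (s : S) (a : A),
        (Vrob d φ μ0 ρ H r πstar πref η h s
          = ⨆ π : {π : ℕ → S → A → ℝ // IsPolicy π},
              Vrob d φ μ0 ρ H r π.1 πref η h s) ∧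
        (Qrob d φ μ0 ρ H r πstar πref η h s a
          = ⨆ π : {π : ℕ → S → A → ℝ // IsPolicy π},
              Qrob d φ μ0 ρ H r π.1 πref η h s a) ∧
        (πstar h s a
          = πref h s a * Real.exp (η * ⨆ π : {π : ℕ → S → A → ℝ // IsPolicy π},
                Qrob d φ μ0 ρ H r π.1 πref η h s a) /
            ∑ a', πref h s a' *
              Real.exp (η * ⨆ π : {π : ℕ → S → A → ℝ // IsPolicy π},
                Qrob d φ μ0 ρ H r π.1 πref η h s a')) := by
  have hρ0 : 0 ≤ ρ := hρ.1.le
  have hrnn : ∀ h s a, (0:ℝ) ≤ r h s a := fun h s a => (hr h s a).1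
  refine ⟨Pistar d φ μ0 ρ H r πref η,
    Pistar_policy d φ μ0 ρ H r πref η hπrefpos, ?_⟩
  intro h hh s a
  haveI : Nonempty {π : ℕ → S → A → ℝ // IsPolicy π} := ⟨⟨πref, hπref⟩⟩
  have hVsup : (⨆ π : {π : ℕ → S → A → ℝ // IsPolicy π},
        Vrob d φ μ0 ρ H r π.1 πref η h s)
      = Vstar d φ μ0 ρ H r πref η (H - h) s := by
    apply le_antisymm
    · exact ciSup_le fun π =>
        Vrob_le_Vstar hφpos hφsum hμ0 hρ0 hrnn hη hπref hπrefpos π.1 π.2 hh.le s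
    · have hb : BddAbove (Set.range fun π : {π : ℕ → S → A → ℝ // IsPolicy π} =>
          Vrob d φ μ0 ρ H r π.1 πref η h s) := by
        refine ⟨Vstar d φ μ0 ρ H r πref η (H - h) s, ?_⟩
        rintro x ⟨π, rfl⟩
        exact Vrob_le_Vstar hφpos hφsum hμ0 hρ0 hrnn hη hπref hπrefpos π.1 π.2 hh.le s
      have hle := le_ciSup hb ⟨Pistar d φ μ0 ρ H r πref η,
        Pistar_policy d φ μ0 ρ H r πref η hπrefpos⟩
      rw [Vrob_star_eq hφpos hφsum hμ0 hρ0 hrnn hη hπref hπrefpos hh.le s] at hle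
      exact hle
  have hQsup : ∀ a' : A, (⨆ π : {π : ℕ → S → A → ℝ // IsPolicy π},
        Qrob d φ μ0 ρ H r π.1 πref η h s a')
      = Qtop d φ μ0 ρ H r πref η h s a' := by
    intro a'
    apply le_antisymm
    · exact ciSup_le fun π =>
        Qrob_le_Qtop hφpos hφsum hμ0 hρ0 hrnn hη hπref hπrefpos π.1 π.2 hh s a'
    · have hb : BddAbove (Set.range fun π : {π : ℕ → S → A → ℝ // IsPolicy π} =>
          Qrob d φ μ0 ρ H r π.1 πref η h s a') := by
        refine ⟨Qtop d φ μ0 ρ H r πref η h s a', ?_⟩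
        rintro x ⟨π, rfl⟩
        exact Qrob_le_Qtop hφpos hφsum hμ0 hρ0 hrnn hη hπref hπrefpos π.1 π.2 hh s a'
      have hle := le_ciSup hb ⟨Pistar d φ μ0 ρ H r πref η,
        Pistar_policy d φ μ0 ρ H r πref η hπrefpos⟩
      rw [Qrob_star_eq hφpos hφsum hμ0 hρ0 hrnn hη hπref hπrefpos hh s a'] at hle
      exact hle
  refine ⟨?_, ?_, ?_⟩
  · rw [hVsup, Vrob_star_eq hφpos hφsum hμ0 hρ0 hrnn hη hπref hπrefpos hh.le s]
  · rw [hQsup a, Qrob_star_eq hφpos hφsum hμ0 hρ0 hrnn hη hπref hπrefpos hh s a]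
  · simp only [hQsup]
    rfl
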